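/- Let κ be an uncountable strong limit cardinal of countable cofinality. If a set A ⊆ κ^ω has the κ-PSP, then either the cardinality of A is at most κ or the cardinality of A equals 2^κ. (The dichotomy for sets with the κ-perfect set property, the higher analogue of the classical fact that sets of reals with the PSP are countable or of size continuum.) -/

import Mathlib

noncomputable section
open Cardinal Set

/-- The ordinal below `o` corresponding to an element of the order type `o.ToType`. -/
def ordinalOf {o : Ordinal} (x : o.ToType) : Ordinal :=
  ((Ordinal.ToType.mk (o := o)).symm x : Set.Iio o).1

/-- Each ordinal's order type carries the discrete topology; the generalized Baire
space `κ^ω = ℕ → κ.ord.ToType` then carries the product topology. -/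
instance (o : Ordinal) : TopologicalSpace o.ToType := ⊥

/-- A subset of the generalized Baire space `κ^ω` is `κ`-perfect if it is nonempty,
closed, and every open neighborhood of each of its points meets it in a set of
cardinality at least `κ`. -/
def IsKappaPerfect (κ : Cardinal) (P : Set (ℕ → κ.ord.ToType)) : Prop :=
  P.Nonempty ∧ IsClosed P ∧
    ∀ x ∈ P, ∀ U : Set (ℕ → κ.ord.ToType), IsOpen U → x ∈ U → κ ≤ #(P ∩ U : Set _)

/-- A set `A ⊆ κ^ω` has the `κ`-perfect set property if either `|A| ≤ κ` or `A`
contains a `κ`-perfect subset. -/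
def HasKappaPSP (κ : Cardinal) (A : Set (ℕ → κ.ord.ToType)) : Prop :=
  #A ≤ κ ∨ ∃ P ⊆ A, IsKappaPerfect κ P

/- ---------------------------------------------------------------------------
Auxiliary material
--------------------------------------------------------------------------- -/

instance (o : Ordinal) : DiscreteTopology o.ToType := ⟨rfl⟩

namespace PSPAux

variable {α : Type*}

/-- The basic cylinder determined by the first `m` values of `s`. -/
def cyl (s : ℕ → α) (m : ℕ) : Set (ℕ → α) := {x | ∀ i < m, x i = s i}

lemma self_mem_cyl (s : ℕ → α) (m : ℕ) : s ∈ cyl s m := fun _ _ => rfl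

lemma isOpen_cyl [TopologicalSpace α] [DiscreteTopology α] (s : ℕ → α) (m : ℕ) :
    IsOpen (cyl s m) := by
  have h : cyl s m = Set.pi ↑(Finset.range m) (fun i => {s i}) := by
    ext x
    simp [cyl, Set.mem_pi]
  rw [h]
  exact isOpen_set_pi (Finset.range m).finite_toSet (fun i _ => isOpen_discrete _)

lemma exists_cyl_subset [TopologicalSpace α] [DiscreteTopology α] {U : Set (ℕ → α)}
    (hU : IsOpen U) {x : ℕ → α} (hx : x ∈ U) : ∃ m, cyl x m ⊆ U := by
  obtain ⟨I, u, hu, hsub⟩ := isOpen_pi_iff.mp hU x hx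
  refine ⟨(I.sup id) + 1, fun y hy => hsub fun i hi => ?_⟩
  have hi' : i ∈ I := Finset.mem_coe.mp hi
  have : i < I.sup id + 1 := Nat.lt_succ_of_le (Finset.le_sup (f := id) hi')
  rw [hy i this]
  exact (hu i hi').2

/-- If `X ⊆ α^ω` has size at least `κ` (strong limit), then for every `μ < κ` there are
arbitrarily large finite levels at which `X` has at least `μ` distinct restrictions. -/
lemma exists_big_level {κ : Cardinal} (hsl : ∀ c < κ, 2 ^ c < κ)
    {X : Set (ℕ → α)} (hX : κ ≤ #X) {μ : Cardinal} (hμ0 : ℵ₀ ≤ μ) (hμκ : μ < κ) (m : ℕ) :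
    ∃ m' > m, μ ≤ #((fun x (i : Fin m') => x i.1) '' X) := by
  by_contra hcon
  push_neg at hcon
  have hinj : Function.Injective
      (fun (x : X) (k : ℕ) =>
        (⟨fun i : Fin (m + 1 + k) => x.1 i.1, ⟨x.1, x.2, rfl⟩⟩ :
          ((fun x (i : Fin (m + 1 + k)) => x i.1) '' X : Set _))) := by
    intro x y h
    apply Subtype.ext
    funext j
    exact congrArg (fun g => (g j).1 ⟨j, by omega⟩) h
  have h1 : #X ≤ prod fun k : ℕ =>
      #((fun x (i : Fin (m + 1 + k)) => x i.1) '' X : Set _) := by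
    rw [← mk_pi]
    exact mk_le_of_injective hinj
  have h2 : (prod fun k : ℕ =>
      #((fun x (i : Fin (m + 1 + k)) => x i.1) '' X : Set _)) ≤ prod fun _ : ℕ => μ :=
    prod_le_prod _ _ fun k => (hcon _ (by omega)).le
  have h3 : (prod fun _ : ℕ => μ) = μ ^ ℵ₀ := by
    rw [prod_const]
    simp
  have h4 : μ ^ ℵ₀ ≤ 2 ^ μ := by
    calc μ ^ ℵ₀ ≤ (2 ^ μ) ^ ℵ₀ := power_le_power_right (cantor μ).le
    _ = 2 ^ (μ * ℵ₀) := by rw [← power_mul]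
    _ = 2 ^ μ := by rw [mul_aleph0_eq hμ0]
  have : κ ≤ 2 ^ μ := hX.trans (h1.trans (h2.trans (h3.le.trans h4)))
  exact (hsl μ hμκ).not_ge this

/-- Splitting step: below any cylinder meeting `P`, one can find `μ` points of `P`
which are pairwise distinguished below some common larger level. -/
lemma step_lemma {κ : Cardinal} (hsl : ∀ c < κ, 2 ^ c < κ)
    {P : Set (ℕ → α)}
    (hbig : ∀ s m, (P ∩ cyl s m).Nonempty → κ ≤ #(P ∩ cyl s m : Set _))
    {μ : Cardinal} (hμ0 : ℵ₀ ≤ μ) (hμκ : μ < κ)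
    (s : ℕ → α) (m : ℕ) (hne : (P ∩ cyl s m).Nonempty) :
    ∃ m' > m, ∃ f : μ.out → (ℕ → α),
      (∀ i, f i ∈ P ∩ cyl s m) ∧
      ∀ i j, i ≠ j → ∃ k < m', f i k ≠ f j k := by
  obtain ⟨m', hm', hlev⟩ := exists_big_level hsl (hbig s m hne) hμ0 hμκ m
  rw [← mk_out μ] at hlev
  obtain ⟨g⟩ := (le_def _ _).mp hlev
  have hg : ∀ i, ∃ x ∈ (P ∩ cyl s m : Set _), (fun j : Fin m' => x j.1) = (g i).1 :=
    fun i => (g i).2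
  choose f hf1 hf2 using hg
  refine ⟨m', hm', f, hf1, fun i j hij => ?_⟩
  have hne' : (fun jj : Fin m' => f i jj.1) ≠ (fun jj : Fin m' => f j jj.1) := by
    rw [hf2 i, hf2 j]
    intro h
    exact hij (g.injective (Subtype.ext h))
  obtain ⟨k, hk⟩ := Function.ne_iff.mp hne'
  exact ⟨k.1, k.2, hk⟩

/-- The tree of approximations: a node is a (representative, length) pair. -/
def treeNode (μ : ℕ → Cardinal) (x₀ : ℕ → α)
    (M : ℕ → (ℕ → α) × ℕ → ℕ)
    (F : ∀ n : ℕ, (ℕ → α) × ℕ → (μ n).out → (ℕ → α)) :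
    ∀ n : ℕ, (∀ i : Fin n, (μ (i : ℕ)).out) → (ℕ → α) × ℕ
  | 0, _ => (x₀, 0)
  | n + 1, σ =>
    (F n (treeNode μ x₀ M F n fun i => σ i.castSucc) (σ (Fin.last n)),
     M n (treeNode μ x₀ M F n fun i => σ i.castSucc))

/-- The node along a full branch. -/
def nodeB (μ : ℕ → Cardinal) (x₀ : ℕ → α)
    (M : ℕ → (ℕ → α) × ℕ → ℕ)
    (F : ∀ n : ℕ, (ℕ → α) × ℕ → (μ n).out → (ℕ → α))
    (b : ∀ n, (μ n).out) (n : ℕ) : (ℕ → α) × ℕ :=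
  treeNode μ x₀ M F n fun i : Fin n => b i

lemma nodeB_succ (μ : ℕ → Cardinal) (x₀ : ℕ → α)
    (M : ℕ → (ℕ → α) × ℕ → ℕ)
    (F : ∀ n : ℕ, (ℕ → α) × ℕ → (μ n).out → (ℕ → α))
    (b : ∀ n, (μ n).out) (n : ℕ) :
    nodeB μ x₀ M F b (n + 1) =
      (F n (nodeB μ x₀ M F b n) (b n), M n (nodeB μ x₀ M F b n)) := rfl

/-- The key tree argument: given suitable splitting data, `∏ μₙ` injects into `P`. -/
lemma tree_card [TopologicalSpace α] [DiscreteTopology α]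
    {P : Set (ℕ → α)} (hPcl : IsClosed P)
    (μ : ℕ → Cardinal) (x₀ : ℕ → α) (hx₀ : x₀ ∈ P)
    (M : ℕ → (ℕ → α) × ℕ → ℕ)
    (F : ∀ n : ℕ, (ℕ → α) × ℕ → (μ n).out → (ℕ → α))
    (hMF : ∀ n p, (P ∩ cyl p.1 p.2).Nonempty →
      (M n p > p.2 ∧ (∀ i, F n p i ∈ P ∩ cyl p.1 p.2) ∧
        ∀ i j, i ≠ j → ∃ k < M n p, F n p i k ≠ F n p j k)) :
    prod (fun n => μ n) ≤ #P := by
  classical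
  -- membership invariant
  have hmem : ∀ (b : ∀ n, (μ n).out) (n : ℕ), (nodeB μ x₀ M F b n).1 ∈ P := by
    intro b n
    induction n with
    | zero => exact hx₀
    | succ n ih =>
      rw [nodeB_succ]
      exact ((hMF n _ ⟨_, ih, self_mem_cyl _ _⟩).2.1 (b n)).1
  have hne : ∀ (b : ∀ n, (μ n).out) (n : ℕ),
      (P ∩ cyl (nodeB μ x₀ M F b n).1 (nodeB μ x₀ M F b n).2).Nonempty :=
    fun b n => ⟨_, hmem b n, self_mem_cyl _ _⟩
  have hlen : ∀ (b : ∀ n, (μ n).out) (n : ℕ),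
      (nodeB μ x₀ M F b n).2 < (nodeB μ x₀ M F b (n + 1)).2 := by
    intro b n
    rw [nodeB_succ]
    exact (hMF n _ (hne b n)).1
  have hmono : ∀ (b : ∀ n, (μ n).out) (n n' : ℕ), n ≤ n' →
      (nodeB μ x₀ M F b n).2 ≤ (nodeB μ x₀ M F b n').2 := by
    intro b n n' h
    induction n' with
    | zero =>
      have h0 : n = 0 := Nat.le_zero.mp h
      subst h0; rfl
    | succ n' ih =>
      rcases Nat.lt_or_ge n (n' + 1) with h' | h'
      · exact (ih (by omega)).trans (hlen b n').le
      · have : n = n' + 1 := by omega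
        subst this; rfl
  have hlen_ge : ∀ (b : ∀ n, (μ n).out) (n : ℕ), n ≤ (nodeB μ x₀ M F b n).2 := by
    intro b n
    induction n with
    | zero => exact Nat.zero_le _
    | succ n ih => exact Nat.lt_of_le_of_lt ih (hlen b n)
  have hcoh1 : ∀ (b : ∀ n, (μ n).out) (n k : ℕ), k < (nodeB μ x₀ M F b n).2 →
      (nodeB μ x₀ M F b (n + 1)).1 k = (nodeB μ x₀ M F b n).1 k := by
    intro b n k hk
    rw [nodeB_succ]
    exact ((hMF n _ (hne b n)).2.1 (b n)).2 k hk
  have hcoh : ∀ (b : ∀ n, (μ n).out) (n n' : ℕ), n ≤ n' →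
      ∀ k < (nodeB μ x₀ M F b n).2,
        (nodeB μ x₀ M F b n').1 k = (nodeB μ x₀ M F b n).1 k := by
    intro b n n' h
    induction n' with
    | zero =>
      intro k hk
      have : n = 0 := by omega
      subst this; rfl
    | succ n' ih =>
      intro k hk
      rcases Nat.lt_or_ge n (n' + 1) with h' | h'
      · have h'' : n ≤ n' := by omega
        rw [hcoh1 b n' k (lt_of_lt_of_le hk (hmono b n n' h''))]
        exact ih h'' k hk
      · have : n = n' + 1 := by omega
        subst this; rfl
  -- the limit point of a branch
  set xlim : (∀ n, (μ n).out) → ℕ → α :=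
    fun b k => (nodeB μ x₀ M F b (k + 1)).1 k with hxlim
  have hagree : ∀ (b : ∀ n, (μ n).out) (K k : ℕ), k < (nodeB μ x₀ M F b K).2 →
      xlim b k = (nodeB μ x₀ M F b K).1 k := by
    intro b K k hk
    rcases le_total (k + 1) K with h | h
    · exact (hcoh b (k + 1) K h k (Nat.lt_of_lt_of_le (Nat.lt_succ_self k)
        (hlen_ge b (k + 1)))).symm
    · exact hcoh b K (k + 1) h k hk
  have hxP : ∀ b, xlim b ∈ P := by
    intro b
    rw [← hPcl.closure_eq]
    rw [mem_closure_iff]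
    intro U hU hxU
    obtain ⟨m, hm⟩ := exists_cyl_subset hU hxU
    refine ⟨(nodeB μ x₀ M F b m).1, hm ?_, hmem b m⟩
    intro i hi
    exact (hagree b m i (lt_of_lt_of_le hi (hlen_ge b m))).symm
  have hinj : Function.Injective xlim := by
    intro b b' h
    by_contra hbb
    obtain ⟨n0, hn0⟩ := Function.ne_iff.mp hbb
    have hex : ∃ n, b n ≠ b' n := ⟨n0, hn0⟩
    set n := Nat.find hex with hn
    have hbn : b n ≠ b' n := Nat.find_spec hex
    have hmin : ∀ m < n, b m = b' m := by
      intro m hm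
      by_contra hc
      exact Nat.find_min hex hm hc
    have heq : nodeB μ x₀ M F b n = nodeB μ x₀ M F b' n := by
      unfold nodeB
      congr 1
      funext i
      exact hmin i i.2
    obtain ⟨k, hk, hnek⟩ := (hMF n _ (hne b n)).2.2 (b n) (b' n) hbn
    have e1 : xlim b k = F n (nodeB μ x₀ M F b n) (b n) k := by
      have := hagree b (n + 1) k (by rw [nodeB_succ]; exact hk)
      rwa [nodeB_succ] at this
    have e2 : xlim b' k = F n (nodeB μ x₀ M F b n) (b' n) k := by
      have := hagree b' (n + 1) k (by rw [nodeB_succ, ← heq]; exact hk)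
      rw [nodeB_succ, ← heq] at this
      exact this
    rw [h] at e1
    exact hnek (e1.symm.trans e2)
  have hmk : prod (fun n => μ n) = #(∀ n, (μ n).out) := by
    rw [mk_pi]
    simp [mk_out]
  rw [hmk]
  exact mk_le_of_injective (f := fun b => (⟨xlim b, hxP b⟩ : P))
    fun b b' hb => hinj (congrArg Subtype.val hb)

end PSPAux

open PSPAux in
/-- A `κ`-perfect set has cardinality at least `2 ^ κ`. -/
lemma perfect_card_ge (κ : Cardinal) (huncount : ℵ₀ < κ)
    (hsl : ∀ c < κ, 2 ^ c < κ) (hcof : κ.ord.cof = ℵ₀)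
    (P : Set (ℕ → κ.ord.ToType)) (hP : IsKappaPerfect κ P) :
    2 ^ κ ≤ #P := by
  classical
  obtain ⟨hPne, hPcl, hPbig⟩ := hP
  have hbig : ∀ s m, (P ∩ cyl s m).Nonempty → κ ≤ #(P ∩ cyl s m : Set _) := by
    rintro s m ⟨x, hxP, hxc⟩
    exact hPbig x hxP _ (isOpen_cyl s m) hxc
  -- a cofinal ω-sequence of cardinals below κ
  obtain ⟨ι, f, hlsub, hmkι⟩ := Ordinal.exists_lsub_cof κ.ord
  rw [hcof] at hmkι
  obtain ⟨d⟩ : Nonempty (Denumerable ι) := Cardinal.denumerable_iff.mpr hmkι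
  let e : ℕ ≃ ι := (Denumerable.eqv ι).symm
  set base : ℕ → Cardinal := fun n => max ℵ₀ (f (e n)).card with hbase
  have hb1 : ∀ n, base n < κ := by
    intro n
    apply max_lt huncount
    exact Cardinal.lt_ord.mp (hlsub ▸ Ordinal.lt_lsub f (e n))
  have hb2 : ∀ n, ℵ₀ ≤ base n := fun n => le_max_left _ _
  have hb3 : ∀ c < κ, ∃ n, c ≤ base n := by
    intro c hc
    have : c.ord < Ordinal.lsub f := hlsub.symm ▸ (Cardinal.ord_lt_ord.mpr hc)
    obtain ⟨i, hi⟩ := Ordinal.lt_lsub_iff.mp this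
    refine ⟨e.symm i, ?_⟩
    have : c ≤ (f i).card := by
      have := Ordinal.card_le_card hi
      rwa [Cardinal.card_ord] at this
    calc c ≤ (f i).card := this
    _ = (f (e (e.symm i))).card := by rw [e.apply_symm_apply]
    _ ≤ base (e.symm i) := le_max_right _ _
  have hsum : Cardinal.sum base = κ := by
    apply le_antisymm
    · calc Cardinal.sum base ≤ Cardinal.sum (fun _ : ℕ => κ) :=
        Cardinal.sum_le_sum _ _ fun n => (hb1 n).le
      _ = ℵ₀ * κ := by rw [Cardinal.sum_const]; simp
      _ = κ := aleph0_mul_eq huncount.le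
    · by_contra hcon
      push_neg at hcon
      have h2 : 2 ^ Cardinal.sum base < κ := hsl _ hcon
      obtain ⟨n, hn⟩ := hb3 _ h2
      have : base n ≤ Cardinal.sum base := Cardinal.le_sum base n
      exact (cantor (Cardinal.sum base)).not_ge (hn.trans this)
  set μ : ℕ → Cardinal := fun n => 2 ^ base n with hμ
  have hμκ : ∀ n, μ n < κ := fun n => hsl _ (hb1 n)
  have hμ0 : ∀ n, ℵ₀ ≤ μ n := fun n => (hb2 n).trans (cantor _).le
  have h2κ : 2 ^ κ = prod (fun n => μ n) := by
    rw [← hsum, power_sum]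
  obtain ⟨x₀, hx₀⟩ := hPne
  have stepEx : ∀ (n : ℕ) (p : (ℕ → κ.ord.ToType) × ℕ),
      ∃ (m' : ℕ) (g : (μ n).out → (ℕ → κ.ord.ToType)),
        (P ∩ cyl p.1 p.2).Nonempty →
          (m' > p.2 ∧ (∀ i, g i ∈ P ∩ cyl p.1 p.2) ∧
            ∀ i j, i ≠ j → ∃ k < m', g i k ≠ g j k) := by
    intro n p
    by_cases h : (P ∩ cyl p.1 p.2).Nonempty
    · obtain ⟨m', hm', g, hg1, hg2⟩ := step_lemma hsl hbig (hμ0 n) (hμκ n) p.1 p.2 h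
      exact ⟨m', g, fun _ => ⟨hm', hg1, hg2⟩⟩
    · exact ⟨0, fun _ => x₀, fun h' => absurd h' h⟩
  choose M F hMF using stepEx
  rw [h2κ]
  exact tree_card hPcl μ x₀ hx₀ M F hMF

/-- For κ an uncountable strong limit cardinal of countable cofinality, every set
A ⊆ κ^ω with the κ-PSP has cardinality at most κ or exactly 2^κ. -/
theorem psp_dichotomy
    (κ : Cardinal)
    (huncount : ℵ₀ < κ)
    (hsl : ∀ c < κ, 2 ^ c < κ)
    (hcof : κ.ord.cof = ℵ₀)
    (A : Set (ℕ → κ.ord.ToType))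
    (hA : HasKappaPSP κ A) :
    #A ≤ κ ∨ #A = 2 ^ κ := by
  rcases hA with h | ⟨P, hPA, hP⟩
  · exact Or.inl h
  · right
    have hup : #A ≤ 2 ^ κ := by
      calc #A ≤ #(ℕ → κ.ord.ToType) := mk_set_le A
      _ = κ ^ ℵ₀ := by
        rw [mk_arrow]
        simp [Cardinal.mk_toType, Cardinal.card_ord]
      _ ≤ (2 ^ κ) ^ ℵ₀ := power_le_power_right (cantor κ).le
      _ = 2 ^ (κ * ℵ₀) := by rw [← power_mul]
      _ = 2 ^ κ := by rw [mul_aleph0_eq huncount.le]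
    have hlo : 2 ^ κ ≤ #A :=
      (perfect_card_ge κ huncount hsl hcof P hP).trans (mk_le_mk_of_subset hPA)
    exact le_antisymm hup hlo
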